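/- arXiv:1009.0984 — 4 statements merged into one kernel-verified Lean document; each statement's English description precedes it below -/
import Mathlib

section
/- For the two-state symmetric telegraph noise (w takes values ±w₀, with symmetric switching rate γ and stationary initial distribution (1/2, 1/2)), the free (no-pulse) decoherence function is ⟨x(t)⟩ = e^{−γt}(cosh(Ωt) + (γ/Ω) sinh(Ωt)) with Ω = √(γ² − w₀²), which equals the sum of components of exp((Γ + iW)t) y(0). -/
/-!
The generator splits as `Γ + iW = -γ • 1 + N` with `N = !![i w₀, γ; γ, -i w₀]`, and
`N * N = Ω² • 1`. The scalar part commutes with everything and contributes `e^{-γt}`; for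
`K = Ω⁻¹ • N` we have `K * K = 1`, so the even and odd terms of the exponential series of
`(Ωt) • K` sum to `cosh (Ωt) • 1` and `sinh (Ωt) • K`. Averaging the row sums of `1` and `K`
over the stationary distribution gives `1` and `γ / Ω`.
-/

open Matrix NormedSpace

theorem exp_smul_eq_cosh_add_sinh_of_mul_self_eq_one {A : Type*} [Ring A] [Algebra ℂ A]
    [TopologicalSpace A] [IsTopologicalRing A] [ContinuousSMul ℂ A] [T2Space A]
    {K : A} (hK : K * K = 1) (z : ℂ) :
    exp (z • K) = Complex.cosh z • (1 : A) + Complex.sinh z • K := by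
  have hpow : ∀ n, K ^ (2 * n) = 1 := fun n => by rw [pow_mul, sq, hK, one_pow]
  rw [exp_eq_tsum ℂ]
  refine HasSum.tsum_eq (HasSum.even_add_odd ?_ ?_)
  · convert (Complex.hasSum_cosh z).smul_const (1 : A) using 2 with n
    rw [smul_pow, hpow, smul_smul, div_eq_inv_mul]
  · convert (Complex.hasSum_sinh z).smul_const K using 2 with n
    rw [smul_pow, pow_succ K, hpow, one_mul, smul_smul, div_eq_inv_mul]

theorem inv_smul_mul_inv_smul_eq_one {A : Type*} [Ring A] [Algebra ℂ A] {N : A} {Ω : ℂ}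
    (hN : N * N = Ω ^ 2 • (1 : A)) (hΩ : Ω ≠ 0) : (Ω⁻¹ • N) * (Ω⁻¹ • N) = 1 := by
  rw [smul_mul_smul_comm, hN, smul_smul, ← sq, ← mul_pow, inv_mul_cancel₀ hΩ, one_pow, one_smul]

theorem Matrix.exp_smul_one_add {n : Type*} [Fintype n] [DecidableEq n] (a : ℂ)
    (B : Matrix n n ℂ) : exp (a • (1 : Matrix n n ℂ) + B) = Complex.exp a • exp B := by
  rw [Matrix.exp_add_of_commute _ _ ((Commute.one_left B).smul_left a), ← diagonal_one,
    ← diagonal_smul, exp_diagonal, smul_eq_diagonal_mul]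
  congr 2
  funext i
  simp [Pi.coe_exp, Complex.exp_eq_exp_ℂ]

def telegraphTraceless (γ w₀ : ℝ) : Matrix (Fin 2) (Fin 2) ℂ :=
  !![Complex.I * w₀, γ; γ, -(Complex.I * w₀)]

theorem telegraphTraceless_mul_self (γ w₀ : ℝ) :
    telegraphTraceless γ w₀ * telegraphTraceless γ w₀ = ((γ : ℂ) ^ 2 - (w₀ : ℂ) ^ 2) • 1 := by
  ext i j
  fin_cases i <;> fin_cases j <;> simp [telegraphTraceless, Matrix.mul_apply] <;>
    ring_nf <;> simp only [Complex.I_sq] <;> ring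

theorem smul_telegraphGenerator_eq (γ w₀ t : ℝ) :
    t • (!![(-γ : ℂ), γ; γ, -γ] + Complex.I • diagonal ![(w₀ : ℂ), -w₀])
      = (-(γ : ℂ) * t) • 1 + (t : ℂ) • telegraphTraceless γ w₀ := by
  ext i j
  fin_cases i <;> fin_cases j <;> simp [telegraphTraceless, Complex.real_smul] <;> ring

theorem sum_mulVec_half_telegraph (γ w₀ : ℝ) (Ω c s : ℂ) :
    ∑ j, ((c • 1 + s • (Ω⁻¹ • telegraphTraceless γ w₀)) *ᵥ ![1/2, 1/2]) j
      = c + s * (γ / Ω) := by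
  simp [telegraphTraceless, mulVec, dotProduct, Fin.sum_univ_two]
  ring

theorem two_state_telegraph_free_decoherence_general
    (γ w₀ : ℝ)
    (Ω : ℂ) (hΩ : Ω ^ 2 = (γ : ℂ) ^ 2 - (w₀ : ℂ) ^ 2) (hΩne : Ω ≠ 0)
    (t : ℝ) :
    ∑ j, ((NormedSpace.exp
        (t • ((!![(-γ : ℂ), γ; γ, -γ]) + Complex.I • (Matrix.diagonal ![(w₀ : ℂ), -w₀])))).mulVec
        ![1/2, 1/2]) j
      = Complex.exp (-(γ : ℂ) * t) *
        (Complex.cosh (Ω * t) + ((γ : ℂ) / Ω) * Complex.sinh (Ω * t)) := by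
  have hK : (Ω⁻¹ • telegraphTraceless γ w₀) * (Ω⁻¹ • telegraphTraceless γ w₀) = 1 :=
    inv_smul_mul_inv_smul_eq_one (by rw [telegraphTraceless_mul_self, hΩ]) hΩne
  have hscale : (t : ℂ) • telegraphTraceless γ w₀
      = (Ω * t) • (Ω⁻¹ • telegraphTraceless γ w₀) := by
    rw [smul_smul, mul_comm Ω, mul_assoc, mul_inv_cancel₀ hΩne, mul_one]
  rw [smul_telegraphGenerator_eq, hscale, Matrix.exp_smul_one_add,
    exp_smul_eq_cosh_add_sinh_of_mul_self_eq_one hK, smul_add, smul_smul, smul_smul,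
    sum_mulVec_half_telegraph]
  ring

/-- For the symmetric two-state telegraph noise (`w = ±w₀`, switching rate `γ`,
stationary initial distribution `(1/2, 1/2)`), the free decoherence function is
`e^{-γt}(cosh(Ωt) + (γ/Ω) sinh(Ωt))` with `Ω² = γ² - w₀²`. -/
theorem two_state_telegraph_free_decoherence
    (γ w₀ : ℝ) (hγ : 0 < γ)
    (Ω : ℂ) (hΩ : Ω ^ 2 = (γ : ℂ) ^ 2 - (w₀ : ℂ) ^ 2) (hΩne : Ω ≠ 0)
    (t : ℝ) :
    ∑ j, ((NormedSpace.exp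
        (t • ((!![(-γ : ℂ), γ; γ, -γ]) + Complex.I • (Matrix.diagonal ![(w₀ : ℂ), -w₀])))).mulVec
        ![1/2, 1/2]) j
      = Complex.exp (-(γ : ℂ) * t) *
        (Complex.cosh (Ω * t) + ((γ : ℂ) / Ω) * Complex.sinh (Ω * t)) :=
  two_state_telegraph_free_decoherence_general γ w₀ Ω hΩ hΩne t
end

section
/- Under the echo condition, the first-order term (in t) of the short-time expansion of the decoherence function vanishes: the coefficient of t in ∑_j [exp((Γ+(−1)^N iW)a_{N+1}t)⋯exp((Γ+iW)a_1 t) y(0)]_j is zero. -/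
/-!
Each factor is `exp (a n t Bₙ) = 1 + a n t Bₙ + O(t²)` with `Bₙ = Γ + (-1)ⁿ i W`, and every factor
equals `1` at `t = 0`, so the derivative at `0` of the ordered product is `∑ n, a n • Bₙ`.
By `∑ a n = 1` and the echo condition this sum is `Γ`, and the total mass of `Γ y(0) = 0` vanishes.
-/

open Matrix Finset

/-- The decoherence function of a qubit under an `N`-pulse dynamical decoupling
sequence with normalized intervals `a`, rate matrix `Γ`, field values `w`, and
initial distribution `y0`. -/
noncomputable def decoherenceFn {N M : ℕ} (Γ : Matrix (Fin M) (Fin M) ℝ)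
    (w : Fin M → ℝ) (y0 : Fin M → ℝ) (a : Fin (N + 1) → ℝ) (t : ℝ) : ℂ :=
  ∑ j, (((List.ofFn fun n : Fin (N + 1) =>
      NormedSpace.exp ((a n * t) •
        ((Γ.map (Complex.ofReal)) +
          ((-1 : ℝ) ^ (n : ℕ)) • (Complex.I • Matrix.diagonal fun j => (w j : ℂ))))).reverse.prod).mulVec
      (fun j => (y0 j : ℂ))) j

theorem HasDerivAt.list_prod_of_eq_one {𝕜 𝔸 ι : Type*} [NontriviallyNormedField 𝕜] [NormedRing 𝔸]
    [NormedAlgebra 𝕜 𝔸] {l : List ι} {f : ι → 𝕜 → 𝔸} {f' : ι → 𝔸} {x : 𝕜}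
    (hf : ∀ i ∈ l, HasDerivAt (f i) (f' i) x) (hf_one : ∀ i ∈ l, f i x = 1) :
    HasDerivAt (fun t => (l.map (f · t)).prod) (l.map f').sum x := by
  induction l with
  | nil => simpa using hasDerivAt_const x (1 : 𝔸)
  | cons i l ih =>
    simp only [List.forall_mem_cons] at hf hf_one
    have htail_one : (l.map (f · x)).prod = 1 := List.prod_eq_one (by simpa using hf_one.2)
    simpa [hf_one.1, htail_one] using hf.1.fun_mul (ih hf.2 hf_one.2)

section OrderedExp

variable {𝕂 𝔸 ι : Type*} [RCLike 𝕂] [NormedRing 𝔸] [NormedAlgebra 𝕂 𝔸] [CompleteSpace 𝔸]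

theorem hasDerivAt_exp_mul_smul_zero (c : 𝕂) (A : 𝔸) :
    HasDerivAt (fun t : 𝕂 => NormedSpace.exp ((c * t) • A)) (c • A) 0 := by
  simpa [mul_comm c, mul_smul] using hasDerivAt_exp_smul_const (c • A) (0 : 𝕂)

theorem hasDerivAt_list_prod_exp_mul_smul_zero (l : List ι) (c : ι → 𝕂) (A : ι → 𝔸) :
    HasDerivAt (fun t => (l.map fun i => NormedSpace.exp ((c i * t) • A i)).prod)
      (l.map fun i => c i • A i).sum 0 :=
  HasDerivAt.list_prod_of_eq_one (fun i _ => hasDerivAt_exp_mul_smul_zero (c i) (A i))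
    (fun i _ => by simp)

end OrderedExp

theorem Finset.sum_smul_add_smul {ι R E : Type*} [CommSemiring R] [AddCommMonoid E] [Module R E]
    (s : Finset ι) (a b : ι → R) (x y : E) :
    ∑ i ∈ s, a i • (x + b i • y) = (∑ i ∈ s, a i) • x + (∑ i ∈ s, b i * a i) • y := by
  simp only [smul_add, smul_smul, Finset.sum_add_distrib, Finset.sum_smul, mul_comm]

def Matrix.sumMulVec {m n R : Type*} [Fintype m] [Fintype n] [CommSemiring R] (v : n → R) :
    Matrix m n R →ₗ[R] R where
  toFun A := ∑ i, (A *ᵥ v) i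
  map_add' A B := by simp only [Matrix.add_mulVec, Pi.add_apply, Finset.sum_add_distrib]
  map_smul' c A := by
    simp only [Matrix.smul_mulVec, Pi.smul_apply, smul_eq_mul, Finset.mul_sum, RingHom.id_apply]

theorem first_order_term_vanishes_general {N M : ℕ}
    (Γ : Matrix (Fin M) (Fin M) ℝ)
    (w : Fin M → ℝ)
    (y0 : Fin M → ℝ)
    (hstat : Γ.mulVec y0 = 0)
    (a : Fin (N + 1) → ℝ) (hasum : ∑ n, a n = 1)
    (hecho : ∑ n : Fin (N + 1), (-1 : ℝ) ^ (n : ℕ) * a n = 0) :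
    deriv (fun t => decoherenceFn Γ w y0 a t) 0 = 0 := by
  -- `NormedSpace.exp` depends only on the topology, so any algebra norm on matrices will do.
  let : NormedRing (Matrix (Fin M) (Fin M) ℂ) := Matrix.linftyOpNormedRing
  let : NormedAlgebra ℝ (Matrix (Fin M) (Fin M) ℂ) := Matrix.linftyOpNormedAlgebra
  let G : Matrix (Fin M) (Fin M) ℂ := Γ.map Complex.ofReal
  let D : Matrix (Fin M) (Fin M) ℂ := Complex.I • Matrix.diagonal fun j => (w j : ℂ)
  let φ := LinearMap.toContinuousLinearMap
    ((Matrix.sumMulVec (m := Fin M) (fun j => (y0 j : ℂ))).restrictScalars ℝ)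
  have hprod := hasDerivAt_list_prod_exp_mul_smul_zero (List.finRange (N + 1)).reverse a
    (fun n => G + ((-1 : ℝ) ^ (n : ℕ)) • D)
  rw [List.map_reverse, List.sum_reverse, ← Fin.sum_univ_def, Finset.sum_smul_add_smul, hasum,
    hecho, one_smul, zero_smul, add_zero] at hprod
  have hφG : φ G = 0 := by
    have hG : G *ᵥ (fun j => (y0 j : ℂ)) = fun i => ((Γ *ᵥ y0) i : ℂ) :=
      funext fun i => (RingHom.map_mulVec Complex.ofRealHom Γ y0 i).symm
    change ∑ i, (G *ᵥ fun j => (y0 j : ℂ)) i = 0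
    simp [hG, hstat]
  have hD : HasDerivAt (fun t => decoherenceFn Γ w y0 a t) (φ G) 0 := by
    simp only [decoherenceFn, List.ofFn_eq_map, ← List.map_reverse]
    exact φ.hasFDerivAt.comp_hasDerivAt 0 hprod
  rw [hD.deriv, hφG]

/-- Under the echo condition, the first-order term (coefficient of `t`) of the
short-time expansion of the decoherence function vanishes. -/
theorem first_order_term_vanishes {N M : ℕ}
    (Γ : Matrix (Fin M) (Fin M) ℝ) (hΓ : ∀ k, ∑ j, Γ j k = 0)
    (w : Fin M → ℝ)
    (y0 : Fin M → ℝ) (hy0 : ∀ j, 0 ≤ y0 j) (hy0sum : ∑ j, y0 j = 1)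
    (hstat : Γ.mulVec y0 = 0)
    (a : Fin (N + 1) → ℝ) (ha : ∀ n, 0 ≤ a n) (hasum : ∑ n, a n = 1)
    (hecho : ∑ n : Fin (N + 1), (-1 : ℝ) ^ (n : ℕ) * a n = 0) :
    deriv (fun t => decoherenceFn Γ w y0 a t) 0 = 0 :=
  first_order_term_vanishes_general Γ w y0 hstat a hasum hecho
end

section
/- For the symmetric two-state telegraph noise, ∑_j [WΓW y(0)]_j = −2γw₀², which is nonzero whenever γ > 0 and w₀ ≠ 0; hence the third-order decoherence term is strictly nonzero for any pulse sequence. -/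
open Matrix Finset

/-- For the symmetric two-state telegraph noise, `∑ⱼ [W Γ W y₀]ⱼ = -2γw₀²`, which
is nonzero whenever `γ > 0` and `w₀ ≠ 0`; hence the third-order decoherence term
is strictly nonzero for any pulse sequence. -/
theorem two_state_WGammaW (γ w₀ : ℝ) :
    (∑ j, ((Matrix.diagonal ![w₀, -w₀] * !![(-γ : ℝ), γ; γ, -γ] *
        Matrix.diagonal ![w₀, -w₀]).mulVec ![1/2, 1/2]) j = -2 * γ * w₀ ^ 2) ∧
    (0 < γ → w₀ ≠ 0 →
      ∑ j, ((Matrix.diagonal ![w₀, -w₀] * !![(-γ : ℝ), γ; γ, -γ] *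
        Matrix.diagonal ![w₀, -w₀]).mulVec ![1/2, 1/2]) j ≠ 0) := by
  have h : ∑ j, ((Matrix.diagonal ![w₀, -w₀] * !![(-γ : ℝ), γ; γ, -γ] *
        Matrix.diagonal ![w₀, -w₀]).mulVec ![1/2, 1/2]) j = -2 * γ * w₀ ^ 2 := by
    simp [Fin.sum_univ_two, mulVec, dotProduct, Matrix.mul_apply, diagonal,
      Fin.sum_univ_succ]
    ring
  refine ⟨h, fun hγ hw => ?_⟩
  rw [h]
  nlinarith [sq_abs w₀, pow_pos (abs_pos.mpr hw) 2]
end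

section
/- Let A = Γ + iW where Γ is a real rate matrix (column sums zero) and W is real diagonal, and let y(0) be a probability vector. Then |∑_j [e^{At} y(0)]_j| ≤ 1 for all t ≥ 0; i.e., the decoherence function has modulus at most 1. -/
/-!
For `B = (t • A)ᵀ` the quantity `Re B_ii + ∑_{j ≠ i} ‖B_ij‖` vanishes for every row `i`: the
imaginary part `iW` only touches the diagonal, and the columns of the rate matrix sum to zero.
So `B` has nonpositive logarithmic norm for the row-sum norm, which gives
`‖1 + hB‖ ≤ 1 + O(h²)`. Writing `exp B = exp (B / n) ^ n` with
`exp (B / n) = 1 + B / n + o(1 / n)` then yields `‖exp B‖ ≤ (1 + o(1 / n)) ^ n → 1`. Hence every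
column of `exp (t • A)` has absolute sum at most `1`, and pairing with a probability vector gives
a number of modulus at most `1`.
-/

open Matrix Finset Filter Topology NormedSpace

theorem Real.pow_le_exp_mul_sub_one {u : ℝ} (hu : 0 ≤ u) (n : ℕ) :
    u ^ n ≤ Real.exp (n * (u - 1)) := by
  rw [Real.exp_nat_mul]
  exact pow_le_pow_left₀ hu (by linarith [Real.add_one_le_exp (u - 1)]) n

section ExpBound

variable {𝔸 : Type*} [NormedRing 𝔸] [NormedAlgebra ℝ 𝔸] [CompleteSpace 𝔸]

theorem tendsto_natCast_smul_exp_inv_smul_sub_one (x : 𝔸) :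
    Tendsto (fun n : ℕ => (n : ℝ) • (exp ((n : ℝ)⁻¹ • x) - 1)) atTop (𝓝 x) := by
  have hslope := (hasDerivAt_exp_smul_const (𝕂 := ℝ) x 0).tendsto_slope_zero_right
  have hinv : Tendsto (fun n : ℕ => (n : ℝ)⁻¹) atTop (𝓝[>] 0) :=
    tendsto_inv_atTop_nhdsGT_zero.comp tendsto_natCast_atTop_atTop
  simpa [Function.comp_def] using hslope.comp hinv

theorem norm_exp_le_one_of_norm_one_add_smul_le [NormedAlgebra ℚ 𝔸] {x : 𝔸} {C : ℝ}
    (hx : ∀ t : ℝ, 0 ≤ t → ‖1 + t • x‖ ≤ 1 + C * t ^ 2) : ‖exp x‖ ≤ 1 := by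
  set r : ℕ → ℝ := fun n => ‖(n : ℝ) • (exp ((n : ℝ)⁻¹ • x) - 1) - x‖
  have hr : Tendsto r atTop (𝓝 0) := by
    simpa [r] using (tendsto_natCast_smul_exp_inv_smul_sub_one x).sub_const x |>.norm
  have hlim : Tendsto (fun n : ℕ => Real.exp (C * (n : ℝ)⁻¹ + r n)) atTop (𝓝 1) := by
    have h0 : Tendsto (fun n : ℕ => C * (n : ℝ)⁻¹ + r n) atTop (𝓝 0) := by
      simpa using ((tendsto_inv_atTop_zero.comp tendsto_natCast_atTop_atTop).const_mul C).add hr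
    exact Real.tendsto_exp_nhds_zero_nhds_one.comp h0
  refine ge_of_tendsto hlim (eventually_ge_atTop 1 |>.mono fun n hn => ?_)
  have hn0 : (n : ℝ) ≠ 0 := by positivity
  set E := exp ((n : ℝ)⁻¹ • x)
  have hpow : exp x = E ^ n := by
    rw [← NormedSpace.exp_nsmul, ← Nat.cast_smul_eq_nsmul ℝ, smul_smul, mul_inv_cancel₀ hn0,
      one_smul]
  have hsplit : E = (1 + (n : ℝ)⁻¹ • x) + (n : ℝ)⁻¹ • ((n : ℝ) • (E - 1) - x) := by
    rw [smul_sub, smul_smul, inv_mul_cancel₀ hn0, one_smul]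
    abel
  have hstep : ‖E‖ ≤ 1 + C * (n : ℝ)⁻¹ ^ 2 + (n : ℝ)⁻¹ * r n := by
    refine (congrArg norm hsplit).trans_le ((norm_add_le _ _).trans ?_)
    rw [norm_smul, Real.norm_of_nonneg (by positivity)]
    gcongr
    exact hx _ (by positivity)
  calc ‖exp x‖ ≤ ‖E‖ ^ n := hpow ▸ norm_pow_le' E hn
    _ ≤ Real.exp (n * (‖E‖ - 1)) := Real.pow_le_exp_mul_sub_one (norm_nonneg E) n
    _ ≤ Real.exp (n * (C * (n : ℝ)⁻¹ ^ 2 + (n : ℝ)⁻¹ * r n)) := by gcongr; linarith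
    _ = Real.exp (C * (n : ℝ)⁻¹ + r n) := by field_simp

end ExpBound

-- `(1 + Re w + ‖w‖² / 2)² = ‖1 + w‖² + (Re w + ‖w‖² / 2)²`
theorem Complex.norm_one_add_le (w : ℂ) : ‖1 + w‖ ≤ 1 + w.re + ‖w‖ ^ 2 / 2 := by
  have hre : w.re ^ 2 ≤ ‖w‖ ^ 2 := by
    rw [← sq_abs]
    exact pow_le_pow_left₀ (abs_nonneg _) (abs_re_le_norm w) 2
  have hsq : ‖1 + w‖ ^ 2 = 1 + 2 * w.re + ‖w‖ ^ 2 := by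
    simp only [Complex.sq_norm, Complex.normSq_add, map_one, one_mul, Complex.conj_re]
    ring
  refine le_of_sq_le_sq ?_ (by nlinarith [sq_nonneg (1 + w.re)])
  nlinarith [sq_nonneg (w.re + ‖w‖ ^ 2 / 2)]

namespace Matrix

section LinftyOpNorm

variable {m n α : Type*} [Fintype m] [Fintype n] [SeminormedAddCommGroup α]

attribute [local instance] Matrix.linftyOpSeminormedAddCommGroup

theorem sum_norm_le_linfty_opNorm (A : Matrix m n α) (i : m) : ∑ j, ‖A i j‖ ≤ ‖A‖ := by
  rw [linfty_opNorm_def]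
  refine le_of_eq_of_le ?_
    (NNReal.coe_le_coe.mpr (le_sup (f := fun i => ∑ j, ‖A i j‖₊) (mem_univ i)))
  simp

theorem linfty_opNorm_le_of_forall_sum_norm_le {A : Matrix m n α} {c : ℝ} (hc : 0 ≤ c)
    (h : ∀ i, ∑ j, ‖A i j‖ ≤ c) : ‖A‖ ≤ c := by
  lift c to NNReal using hc
  rw [← coe_nnnorm, linfty_opNNNorm_def, NNReal.coe_le_coe]
  exact Finset.sup_le fun i _ => by simpa [← NNReal.coe_le_coe] using h i

end LinftyOpNorm

variable {n : Type*} [Fintype n] [DecidableEq n]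

/-- The logarithmic norm of `B` for the row-sum (`ℓ^∞` operator) norm is nonpositive. -/
def RowDissipative (B : Matrix n n ℂ) : Prop :=
  ∀ i, (B i i).re + ∑ j ∈ univ.erase i, ‖B i j‖ ≤ 0

theorem RowDissipative.smul {B : Matrix n n ℂ} (hB : B.RowDissipative) {t : ℝ} (ht : 0 ≤ t) :
    (t • B).RowDissipative := fun i => by
  simpa [norm_smul, abs_of_nonneg ht, ← mul_sum, ← mul_add] using
    mul_nonpos_of_nonneg_of_nonpos ht (hB i)

theorem rowDissipative_transpose_map_ofReal_add_I_smul_diagonal (Γ : Matrix n n ℝ)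
    (hΓoff : ∀ j k, j ≠ k → 0 ≤ Γ j k) (hΓcol : ∀ k, ∑ j, Γ j k = 0) (w : n → ℝ) :
    (Γ.map Complex.ofReal + Complex.I • diagonal fun j => (w j : ℂ))ᵀ.RowDissipative := by
  intro i
  have hoff : ∑ j ∈ univ.erase i,
      ‖(Γ.map Complex.ofReal + Complex.I • diagonal fun j => (w j : ℂ))ᵀ i j‖ =
        ∑ j ∈ univ.erase i, Γ j i := by
    refine sum_congr rfl fun j hj => ?_
    have hji : j ≠ i := ne_of_mem_erase hj
    simp [diagonal_apply_ne _ hji, hΓoff j i hji]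
  rw [hoff, ← hΓcol i, ← add_sum_erase _ _ (mem_univ i)]
  simp

attribute [local instance] Matrix.linftyOpNormedRing Matrix.linftyOpNormedAlgebra

theorem RowDissipative.norm_one_add_smul_le {B : Matrix n n ℂ} (hB : B.RowDissipative) {t : ℝ}
    (ht : 0 ≤ t) : ‖1 + t • B‖ ≤ 1 + ‖B‖ ^ 2 / 2 * t ^ 2 := by
  refine linfty_opNorm_le_of_forall_sum_norm_le (by positivity) fun i => ?_
  have hBii : ‖B i i‖ ≤ ‖B‖ :=
    (single_le_sum (fun j _ => norm_nonneg (B i j)) (mem_univ i)).trans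
      (sum_norm_le_linfty_opNorm B i)
  have hdiag : ‖(1 + t • B) i i‖ ≤ 1 + t * (B i i).re + t ^ 2 * ‖B i i‖ ^ 2 / 2 := by
    simpa [norm_smul, abs_of_nonneg ht, mul_pow] using Complex.norm_one_add_le (t • B i i)
  have hoff : ∑ j ∈ univ.erase i, ‖(1 + t • B) i j‖ = t * ∑ j ∈ univ.erase i, ‖B i j‖ := by
    rw [mul_sum]
    refine sum_congr rfl fun j hj => ?_
    simp [one_apply_ne' (ne_of_mem_erase hj), abs_of_nonneg ht]
  rw [← add_sum_erase _ _ (mem_univ i), hoff]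
  nlinarith [mul_nonpos_of_nonneg_of_nonpos ht (hB i), pow_le_pow_left₀ (norm_nonneg _) hBii 2,
    sq_nonneg t]

theorem RowDissipative.norm_exp_le_one {B : Matrix n n ℂ} (hB : B.RowDissipative) :
    ‖exp B‖ ≤ 1 :=
  norm_exp_le_one_of_norm_one_add_smul_le fun _ ht => hB.norm_one_add_smul_le ht

theorem RowDissipative.sum_norm_exp_le_one {B : Matrix n n ℂ} (hB : B.RowDissipative) (i : n) :
    ∑ j, ‖exp B i j‖ ≤ 1 :=
  (sum_norm_le_linfty_opNorm _ i).trans hB.norm_exp_le_one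

end Matrix

theorem Matrix.norm_sum_mulVec_le_sum_norm {m n R : Type*} [Fintype m] [Fintype n]
    [SeminormedRing R] {E : Matrix m n R} (hE : ∀ k, ∑ j, ‖E j k‖ ≤ 1) (y : n → R) :
    ‖∑ j, (E *ᵥ y) j‖ ≤ ∑ k, ‖y k‖ := by
  have hswap : ∑ j, (E *ᵥ y) j = ∑ k, (∑ j, E j k) * y k := by
    simp only [mulVec, dotProduct, sum_mul]
    exact sum_comm
  calc ‖∑ j, (E *ᵥ y) j‖ ≤ ∑ k, ‖∑ j, E j k‖ * ‖y k‖ := by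
        rw [hswap]
        exact (norm_sum_le _ _).trans (sum_le_sum fun k _ => norm_mul_le _ _)
    _ ≤ ∑ k, ‖y k‖ := by
        gcongr with k
        exact mul_le_of_le_one_left (norm_nonneg _) ((norm_sum_le _ _).trans (hE k))

/-- For `A = Γ + iW` with `Γ` a rate matrix (nonnegative off-diagonal entries and
zero column sums) and `W` real diagonal, and `y₀` a probability vector, the
decoherence function `∑ⱼ [e^{At} y₀]ⱼ` has modulus at most `1` for all `t ≥ 0`. -/
theorem decoherence_modulus_le_one {M : ℕ}
    (Γ : Matrix (Fin M) (Fin M) ℝ)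
    (hΓoff : ∀ j k, j ≠ k → 0 ≤ Γ j k)
    (hΓcol : ∀ k, ∑ j, Γ j k = 0)
    (w : Fin M → ℝ)
    (y0 : Fin M → ℝ) (hy0 : ∀ j, 0 ≤ y0 j) (hy0sum : ∑ j, y0 j = 1)
    (t : ℝ) (ht : 0 ≤ t) :
    ‖∑ j, ((NormedSpace.exp
        (t • ((Γ.map Complex.ofReal) +
          Complex.I • Matrix.diagonal fun j => (w j : ℂ)))).mulVec
        (fun j => (y0 j : ℂ))) j‖ ≤ 1 := by
  set A : Matrix (Fin M) (Fin M) ℂ := Γ.map Complex.ofReal + Complex.I • diagonal fun j => (w j : ℂ)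
  have hdiss : (t • A)ᵀ.RowDissipative := by
    rw [transpose_smul]
    exact (rowDissipative_transpose_map_ofReal_add_I_smul_diagonal Γ hΓoff hΓcol w).smul ht
  have hcol : ∀ k, ∑ j, ‖exp (t • A) j k‖ ≤ 1 := fun k => by
    simpa only [exp_transpose, transpose_apply] using hdiss.sum_norm_exp_le_one k
  calc _ ≤ ∑ k, ‖(y0 k : ℂ)‖ := norm_sum_mulVec_le_sum_norm hcol _
    _ = 1 := by simp [abs_of_nonneg (hy0 _), hy0sum]
end
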